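/- arXiv:2208.01119 — 6 statements merged into one kernel-verified Lean document; each statement's English description precedes it below -/
import Mathlib

section
/- Let G be a finite directed graph, and let v be a vertex without a self-loop whose unique in-neighbor is u (i.e., E w v holds exactly when w = u). Then every directed cycle through v also passes through u, and there exists a minimum directed feedback vertex set of G that does not contain v. -/
/-- The index following `i` cyclically in the list `l`. -/
def cycNext (l : List V) (i : Fin l.length) : Fin l.length :=
  ⟨(i.val + 1) % l.length, Nat.mod_lt _ i.pos⟩

/-- `l` is a directed cycle of the digraph with edge relation `E`: a nonempty list of
pairwise distinct vertices with an edge from each vertex to the cyclically next one. -/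
def IsDicycle (E : V → V → Prop) (l : List V) : Prop :=
  l ≠ [] ∧ l.Nodup ∧ ∀ i : Fin l.length, E (l.get i) (l.get (cycNext l i))

/-- `(u, w)` is a chord of the cycle `l`: an edge between vertices of `l`
that is not one of the cycle's edges. -/
def IsChord (E : V → V → Prop) (l : List V) (u w : V) : Prop :=
  u ∈ l ∧ w ∈ l ∧ E u w ∧
    ∀ i : Fin l.length, ¬(l.get i = u ∧ l.get (cycNext l i) = w)

/-- `l` is a chordless directed cycle. -/
def IsChordlessDicycle (E : V → V → Prop) (l : List V) : Prop :=
  IsDicycle E l ∧ ∀ u w, ¬ IsChord E l u w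

/-- `S` is a directed feedback vertex set: the subgraph induced on the complement
of `S` contains no directed cycle. -/
def IsDFVS (E : V → V → Prop) (S : Set V) : Prop :=
  ¬ ∃ l : List V, IsDicycle (fun a b => E a b ∧ a ∉ S ∧ b ∉ S) l

/-! Every cycle through `v` enters it along its only in-edge, from `u`. Hence in a minimum
feedback vertex set containing `v`, replacing `v` by `u` still meets every cycle and does not
increase the size. -/

section Dicycle

variable {V : Type*} {E : V → V → Prop}

theorem cycNext_surjective (l : List V) : Function.Surjective (cycNext l) := by
  intro i
  have hn : 0 < l.length := i.pos
  refine ⟨⟨(i.val + (l.length - 1)) % l.length, Nat.mod_lt _ hn⟩, Fin.ext ?_⟩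
  have hsucc : i.val + (l.length - 1) + 1 = i.val + l.length := by omega
  simp only [cycNext, Nat.mod_add_mod, hsucc, Nat.add_mod_right, Nat.mod_eq_of_lt i.isLt]

theorem IsDicycle.exists_rel_of_mem {l : List V} (hl : IsDicycle E l) {x : V} (hx : x ∈ l) :
    ∃ y ∈ l, E y x := by
  obtain ⟨i, rfl⟩ := List.mem_iff_get.mp hx
  obtain ⟨j, rfl⟩ := cycNext_surjective l i
  exact ⟨l.get j, List.get_mem l j, hl.2.2 j⟩

theorem IsDicycle.mem_of_forall_rel {l : List V} (hl : IsDicycle E l) {u v : V}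
    (huniq : ∀ w, E w v → w = u) (hv : v ∈ l) : u ∈ l := by
  obtain ⟨w, hw, hwv⟩ := hl.exists_rel_of_mem hv
  exact huniq w hwv ▸ hw

theorem isDFVS_iff {S : Set V} : IsDFVS E S ↔ ∀ l, IsDicycle E l → ∃ x ∈ l, x ∈ S := by
  constructor
  · intro hS l hl
    by_contra! hdisj
    exact hS ⟨l, hl.1, hl.2.1, fun i =>
      ⟨hl.2.2 i, hdisj _ (List.get_mem l i), hdisj _ (List.get_mem l _)⟩⟩
  · rintro hS ⟨l, hl⟩
    obtain ⟨x, hx, hxS⟩ := hS l ⟨hl.1, hl.2.1, fun i => (hl.2.2 i).1⟩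
    obtain ⟨i, rfl⟩ := List.mem_iff_get.mp hx
    exact (hl.2.2 i).2.1 hxS

theorem isDFVS_univ : IsDFVS E Set.univ :=
  isDFVS_iff.mpr fun _ hl => ⟨_, List.head_mem hl.1, Set.mem_univ _⟩

theorem IsDFVS.insert_erase [DecidableEq V] {S : Finset V} (hS : IsDFVS E S) {u v : V}
    (huv : ∀ l, IsDicycle E l → v ∈ l → u ∈ l) : IsDFVS E ↑(insert u (S.erase v)) := by
  refine isDFVS_iff.mpr fun l hl => ?_
  by_cases hv : v ∈ l
  · exact ⟨u, huv l hl hv, by simp⟩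
  · obtain ⟨x, hx, hxS⟩ := isDFVS_iff.mp hS l hl
    have hxv : x ≠ v := fun h => hv (h ▸ hx)
    exact ⟨x, hx, by simp [hxv, hxS]⟩

theorem exists_isDFVS_forall_card_le [Fintype V] (E : V → V → Prop) :
    ∃ S : Finset V, IsDFVS E ↑S ∧ ∀ T : Finset V, IsDFVS E ↑T → S.card ≤ T.card := by
  classical
  obtain ⟨S, hS, hmin⟩ := Finset.exists_min_image
    (Finset.univ.filter fun S : Finset V => IsDFVS E ↑S) Finset.card
    ⟨Finset.univ, Finset.mem_filter.mpr ⟨Finset.mem_univ _, by simpa using isDFVS_univ⟩⟩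
  exact ⟨S, (Finset.mem_filter.mp hS).2, fun T hT => hmin T (by simpa using hT)⟩

end Dicycle

theorem unique_in_neighbor_reduction {V : Type*} [Fintype V] (E : V → V → Prop)
    (u v : V) (hloop : ¬ E v v) (huniq : ∀ w, E w v ↔ w = u) :
    (∀ l : List V, IsDicycle E l → v ∈ l → u ∈ l) ∧
    ∃ S : Finset V, IsDFVS E ↑S ∧ v ∉ S ∧
      ∀ T : Finset V, IsDFVS E ↑T → S.card ≤ T.card := by
  classical
  have hcyc : ∀ l, IsDicycle E l → v ∈ l → u ∈ l := fun l hl =>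
    hl.mem_of_forall_rel fun w => (huniq w).mp
  refine ⟨hcyc, ?_⟩
  obtain ⟨S, hS, hmin⟩ := exists_isDFVS_forall_card_le E
  by_cases hvS : v ∈ S
  · have hvu : v ≠ u := fun h => hloop ((huniq v).mpr h)
    refine ⟨insert u (S.erase v), hS.insert_erase hcyc, by simp [hvu], fun T hT => ?_⟩
    calc (insert u (S.erase v)).card ≤ (S.erase v).card + 1 := Finset.card_insert_le _ _
      _ = S.card := Finset.card_erase_add_one hvS
      _ ≤ T.card := hmin T hT
  · exact ⟨S, hS, hvS, hmin⟩
end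

section
/- Let G be a finite directed graph with distinct vertices u, v having no edges between them or self-loops (¬E u v, ¬E v u, ¬E u u, ¬E v v) and identical in-neighborhoods and out-neighborhoods: for every w ∉ {u, v}, E w u ↔ E w v and E u w ↔ E v w. If S is a directed feedback vertex set of G with u ∈ S and v ∉ S, then S \ {u} is also a directed feedback vertex set of G. -/
/-! Sending `u` to its twin `v` and fixing every other vertex maps each edge of the subgraph
induced on the complement of `S \ {u}` to an edge of the subgraph induced on the complement of
`S`: the only edges that would become loops at `v` are `uv`, `vu` and `uu`, which are absent.
So a directed cycle avoiding `S \ {u}` becomes a closed walk avoiding `S`, and shortcutting a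
closed walk at repeated vertices leaves a directed cycle. -/

theorem forall_rel_get_cycNext_iff {V : Type*} {R : V → V → Prop} {l : List V} :
    (∀ i : Fin l.length, R (l.get i) (l.get (cycNext l i))) ↔ l.Forall₂ R (l.rotate 1) := by
  simp [List.forall₂_iff_get, List.getElem_rotate, cycNext, Fin.forall_iff]

theorem isDicycle_cons_iff {V : Type*} {R : V → V → Prop} {a : V} {t : List V} :
    IsDicycle R (a :: t) ↔ (a :: t).Nodup ∧ (a :: t ++ [a]).IsChain R := by
  rw [IsDicycle, forall_rel_get_cycNext_iff, List.isChain_cons_append_singleton_iff_forall₂,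
    List.rotate_cons_succ, List.rotate_zero]
  simp

theorem List.exists_cons_append_singleton_infix_of_not_nodup {α : Type*} {l : List α}
    (h : ¬ l.Nodup) : ∃ x q, x :: q ++ [x] <:+: l ∧ q.length + 2 ≤ l.length := by
  obtain ⟨x, hx⟩ := not_forall_not.mp (List.nodup_iff_sublist.not.mp h)
  obtain ⟨r₁, r₂, rfl, hx₁, hx₂⟩ := List.cons_sublist_iff.mp hx
  obtain ⟨p, s, rfl⟩ := List.append_of_mem hx₁
  obtain ⟨s', r, rfl⟩ := List.append_of_mem (List.singleton_sublist.mp hx₂)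
  exact ⟨x, s ++ s', ⟨p, r, by simp⟩, by simp; omega⟩

theorem exists_isDicycle_of_isChain {V : Type*} {R : V → V → Prop} {x : V} {q : List V}
    (h : (x :: q ++ [x]).IsChain R) : ∃ c, IsDicycle R c := by
  by_cases hnd : (x :: q).Nodup
  · exact ⟨x :: q, isDicycle_cons_iff.mpr ⟨hnd, h⟩⟩
  · obtain ⟨y, q', hinfix, hlen⟩ := List.exists_cons_append_singleton_infix_of_not_nodup hnd
    exact exists_isDicycle_of_isChain (h.infix (hinfix.trans (List.prefix_append _ _).isInfix))
termination_by q.length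
decreasing_by simp at hlen; omega

theorem IsDicycle.exists_isDicycle_map {V W : Type*} {R : V → V → Prop} {R' : W → W → Prop}
    (f : V → W) (hf : ∀ a b, R a b → R' (f a) (f b)) {l : List V} (hl : IsDicycle R l) :
    ∃ c, IsDicycle R' c := by
  obtain ⟨a, t, rfl⟩ := List.exists_cons_of_ne_nil hl.1
  apply exists_isDicycle_of_isChain (x := f a) (q := t.map f)
  simpa using List.isChain_map_of_isChain f hf (isDicycle_cons_iff.mp hl).2

theorem rel_ite_of_twin {V : Type*} [DecidableEq V] {E : V → V → Prop} {u v : V}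
    (h1 : ¬ E u v) (h2 : ¬ E v u) (hu : ¬ E u u)
    (htwin : ∀ w, w ≠ u → w ≠ v → ((E w u ↔ E w v) ∧ (E u w ↔ E v w))) {a b : V} (hab : E a b) :
    E (if a = u then v else a) (if b = u then v else b) := by
  split_ifs with hau hbu hbu
  · exact absurd (by rwa [hau, hbu] at hab) hu
  · subst hau
    exact ((htwin b hbu fun hbv => h1 (hbv ▸ hab)).2).mp hab
  · subst hbu
    exact ((htwin a hau fun hav => h2 (hav ▸ hab)).1).mp hab
  · exact hab

theorem twin_removal_general {V : Type*} (E : V → V → Prop)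
    (u v : V)
    (h1 : ¬ E u v) (h2 : ¬ E v u) (hu : ¬ E u u)
    (htwin : ∀ w, w ≠ u → w ≠ v → ((E w u ↔ E w v) ∧ (E u w ↔ E v w)))
    (S : Set V) (hS : IsDFVS E S) (hvS : v ∉ S) :
    IsDFVS E (S \ {u}) := by
  classical
  rintro ⟨l, hl⟩
  have hmem : ∀ c, c ∉ S \ {u} → (if c = u then v else c) ∉ S := by
    intro c hc
    split_ifs with hcu
    · exact hvS
    · exact fun hcS => hc ⟨hcS, hcu⟩
  exact hS (hl.exists_isDicycle_map _ fun a b ⟨hab, ha, hb⟩ =>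
    ⟨rel_ite_of_twin h1 h2 hu htwin hab, hmem a ha, hmem b hb⟩)

theorem twin_removal {V : Type*} [Fintype V] (E : V → V → Prop)
    (u v : V) (huv : u ≠ v)
    (h1 : ¬ E u v) (h2 : ¬ E v u) (hu : ¬ E u u) (hv : ¬ E v v)
    (htwin : ∀ w, w ≠ u → w ≠ v → ((E w u ↔ E w v) ∧ (E u w ↔ E v w)))
    (S : Set V) (hS : IsDFVS E S) (huS : u ∈ S) (hvS : v ∉ S) :
    IsDFVS E (S \ {u}) :=
  twin_removal_general E u v h1 h2 hu htwin S hS hvS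
end

section
/- Let G be a finite directed graph with an edge E u v, and let a, b be vertices with a, b ∉ {u, v} such that every undirected path from a to b in the underlying undirected graph passes through u or through v. Then every directed cycle of G containing both a and b contains u and v non-consecutively (in particular (u, v) is a chord of it); consequently no chordless directed cycle of G contains both a and b. -/
/-!
Read the cycle as a periodic sequence indexed by `ℕ`, with `a` at position `p` and `b` at a
position `q` with `p < q < p + n`. The arcs `a → b` and `b → a` of the cycle are paths in the
underlying graph, so the separator `{u, v}` meets each of them strictly between its ends. The two
vertices met are distinct, so `u` and `v` lie on different arcs, and two positions on different
open arcs are never cyclically consecutive: the step between them would skip `a` or `b`.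
-/

theorem Nat.mod_ne_mod_of_lt_of_lt_add {n j k : ℕ} (hjk : j < k) (hkj : k < j + n) :
    j % n ≠ k % n := fun h =>
  hjk.ne (Nat.ModEq.eq_of_abs_lt h (by rw [abs_lt]; omega))

theorem exists_mem_Ioo_not_of_not_reflTransGen {V : Type*} {R : V → V → Prop} {P : V → Prop}
    (f : ℕ → V) {i j : ℕ} (hij : i ≤ j) (hi : P (f i)) (hj : P (f j))
    (hR : ∀ k, P (f k) → P (f (k + 1)) → R (f k) (f (k + 1)))
    (h : ¬ Relation.ReflTransGen R (f i) (f j)) : ∃ k ∈ Set.Ioo i j, ¬ P (f k) := by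
  by_contra! hP
  have hP' : ∀ k, i ≤ k → k ≤ j → P (f k) := by
    intro k hik hkj
    rcases hik.eq_or_lt with rfl | hik; · exact hi
    rcases hkj.eq_or_lt with rfl | hkj; · exact hj
    exact hP k ⟨hik, hkj⟩
  refine h ((reflTransGen_of_succ_of_le (fun k l => R (f k) (f l)) (fun k hk => ?_) hij).lift f
    fun _ _ => id)
  rw [Order.succ_eq_add_one]
  exact hR k (hP' k hk.1 hk.2.le) (hP' (k + 1) (by grind) hk.2)

section CycleIndexing

variable {V : Type*}

def cycGet (l : List V) (hl : 0 < l.length) (k : ℕ) : V :=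
  l.get ⟨k % l.length, Nat.mod_lt _ hl⟩

variable {l : List V} (hl : 0 < l.length)

theorem cycGet_mem (k : ℕ) : cycGet l hl k ∈ l := List.get_mem _ _

theorem cycGet_val (i : Fin l.length) : cycGet l hl i = l.get i := by
  simp only [cycGet, Nat.mod_eq_of_lt i.isLt]

theorem cycGet_val_add_one (i : Fin l.length) : cycGet l hl (i + 1) = l.get (cycNext l i) := rfl

theorem cycGet_add_length (k : ℕ) : cycGet l hl (k + l.length) = cycGet l hl k := by
  simp only [cycGet, Nat.add_mod_right]

theorem cycGet_eq_cycGet_iff (hnd : l.Nodup) {j k : ℕ} :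
    cycGet l hl j = cycGet l hl k ↔ j % l.length = k % l.length :=
  (List.nodup_iff_injective_get.mp hnd).eq_iff.trans Fin.mk_eq_mk

theorem cycGet_ne_cycGet (hnd : l.Nodup) {j k : ℕ} (hjk : j < k) (hkj : k < j + l.length) :
    cycGet l hl j ≠ cycGet l hl k :=
  (cycGet_eq_cycGet_iff hl hnd).not.mpr (Nat.mod_ne_mod_of_lt_of_lt_add hjk hkj)

theorem not_cycNext_of_lt_of_lt_add (hnd : l.Nodup) {j k : ℕ} (hjk : j + 1 < k)
    (hkj : k < j + 1 + l.length) (i : Fin l.length) :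
    ¬(l.get i = cycGet l hl j ∧ l.get (cycNext l i) = cycGet l hl k) := by
  rintro ⟨hi, hi'⟩
  rw [← cycGet_val hl, cycGet_eq_cycGet_iff hl hnd] at hi
  rw [← cycGet_val_add_one hl, cycGet_eq_cycGet_iff hl hnd] at hi'
  apply Nat.mod_ne_mod_of_lt_of_lt_add hjk hkj
  rw [← hi', Nat.add_mod, ← hi, ← Nat.add_mod]

theorem IsDicycle.rel_cycGet {E : V → V → Prop} (h : IsDicycle E l) (k : ℕ) :
    E (cycGet l hl k) (cycGet l hl (k + 1)) := by
  simpa only [cycGet, cycNext, Nat.mod_mod, Nat.mod_add_mod] using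
    h.2.2 ⟨k % l.length, Nat.mod_lt _ hl⟩

theorem exists_cycGet_eq_of_ne {a b : V} (ha : a ∈ l) (hb : b ∈ l) (hab : a ≠ b) :
    ∃ p q, p < q ∧ q < p + l.length ∧ cycGet l hl p = a ∧ cycGet l hl q = b := by
  obtain ⟨⟨p, hp⟩, rfl⟩ := List.get_of_mem ha
  obtain ⟨⟨q, hq⟩, rfl⟩ := List.get_of_mem hb
  have hpq : p ≠ q := fun h => hab (by simp only [h])
  rcases hpq.lt_or_gt with hpq | hqp
  · exact ⟨p, q, hpq, by omega, cycGet_val hl ⟨p, hp⟩, cycGet_val hl ⟨q, hq⟩⟩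
  · refine ⟨p, q + l.length, by omega, by omega, cycGet_val hl ⟨p, hp⟩, ?_⟩
    rw [cycGet_add_length, cycGet_val hl ⟨q, hq⟩]

end CycleIndexing

theorem IsDicycle.not_cycNext_of_separates {V : Type*} {E : V → V → Prop} {l : List V}
    {u v a b : V} (hdc : IsDicycle E l) (hau : a ≠ u) (hav : a ≠ v) (hbu : b ≠ u) (hbv : b ≠ v)
    (hsep : ¬ Relation.ReflTransGen
      (fun x y => (E x y ∨ E y x) ∧ x ≠ u ∧ x ≠ v ∧ y ≠ u ∧ y ≠ v) a b)
    (ha : a ∈ l) (hb : b ∈ l) :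
    u ∈ l ∧ v ∈ l ∧
      (∀ i : Fin l.length, ¬(l.get i = u ∧ l.get (cycNext l i) = v)) ∧
      (∀ i : Fin l.length, ¬(l.get i = v ∧ l.get (cycNext l i) = u)) := by
  have hab : a ≠ b := by rintro rfl; exact hsep .refl
  set R := fun x y => (E x y ∨ E y x) ∧ x ≠ u ∧ x ≠ v ∧ y ≠ u ∧ y ≠ v
  have : Std.Symm R := ⟨fun _ _ ⟨hxy, hx, hx', hy, hy'⟩ => ⟨hxy.symm, hy, hy', hx, hx'⟩⟩
  have hsep' : ¬ Relation.ReflTransGen R b a := fun h => hsep (Std.Symm.symm _ _ h)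
  have hl := List.length_pos_iff.mpr hdc.1
  have hnd := hdc.2.1
  obtain ⟨p, q, hpq, hqp, hfp, hfq⟩ := exists_cycGet_eq_of_ne hl ha hb hab
  set f := cycGet l hl
  have hfp' : f (p + l.length) = a := (cycGet_add_length hl p).trans hfp
  have hstep (k : ℕ) (hk : f k ≠ u ∧ f k ≠ v) (hk' : f (k + 1) ≠ u ∧ f (k + 1) ≠ v) :
      R (f k) (f (k + 1)) :=
    ⟨.inl (hdc.rel_cycGet hl k), hk.1, hk.2, hk'.1, hk'.2⟩
  obtain ⟨j, ⟨hpj, hjq⟩, hfj⟩ := exists_mem_Ioo_not_of_not_reflTransGen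
    (P := fun x => x ≠ u ∧ x ≠ v) f hpq.le (hfp ▸ ⟨hau, hav⟩) (hfq ▸ ⟨hbu, hbv⟩) hstep
    (hfp ▸ hfq ▸ hsep)
  obtain ⟨k, ⟨hqk, hkp⟩, hfk⟩ := exists_mem_Ioo_not_of_not_reflTransGen
    (P := fun x => x ≠ u ∧ x ≠ v) f hqp.le (hfq ▸ ⟨hbu, hbv⟩) (hfp' ▸ ⟨hau, hav⟩) hstep
    (hfp' ▸ hfq ▸ hsep')
  have hjk : f j ≠ f k := cycGet_ne_cycGet hl hnd (by omega) (by omega)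
  have hjk' := not_cycNext_of_lt_of_lt_add hl hnd (j := j) (k := k) (by omega) (by omega)
  have hkj := not_cycNext_of_lt_of_lt_add hl hnd (j := k) (k := j + l.length) (by omega) (by omega)
  rw [cycGet_add_length] at hkj
  have huv : (f j = u ∧ f k = v) ∨ (f j = v ∧ f k = u) := by grind
  rcases huv with ⟨hju, hkv⟩ | ⟨hjv, hku⟩
  · exact ⟨hju ▸ cycGet_mem hl j, hkv ▸ cycGet_mem hl k, hju ▸ hkv ▸ hjk', hju ▸ hkv ▸ hkj⟩
  · exact ⟨hku ▸ cycGet_mem hl k, hjv ▸ cycGet_mem hl j, hku ▸ hjv ▸ hkj, hku ▸ hjv ▸ hjk'⟩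

theorem edge_separator_chord_general {V : Type*} (E : V → V → Prop)
    (u v a b : V) (he : E u v)
    (hau : a ≠ u) (hav : a ≠ v) (hbu : b ≠ u) (hbv : b ≠ v)
    (hsep : ¬ Relation.ReflTransGen
      (fun x y => (E x y ∨ E y x) ∧ x ≠ u ∧ x ≠ v ∧ y ≠ u ∧ y ≠ v) a b) :
    (∀ l : List V, IsDicycle E l → a ∈ l → b ∈ l →
      u ∈ l ∧ v ∈ l ∧
      (∀ i : Fin l.length, ¬(l.get i = u ∧ l.get (cycNext l i) = v)) ∧
      (∀ i : Fin l.length, ¬(l.get i = v ∧ l.get (cycNext l i) = u)) ∧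
      IsChord E l u v) ∧
    (∀ l : List V, IsChordlessDicycle E l → ¬(a ∈ l ∧ b ∈ l)) := by
  refine ⟨fun l hl ha hb => ?_, fun l ⟨hl, hchordless⟩ ⟨ha, hb⟩ => ?_⟩
  · obtain ⟨hu, hv, huv, hvu⟩ := hl.not_cycNext_of_separates hau hav hbu hbv hsep ha hb
    exact ⟨hu, hv, huv, hvu, hu, hv, he, huv⟩
  · obtain ⟨hu, hv, huv, -⟩ := hl.not_cycNext_of_separates hau hav hbu hbv hsep ha hb
    exact hchordless u v ⟨hu, hv, he, huv⟩

theorem edge_separator_chord {V : Type*} [Fintype V] (E : V → V → Prop)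
    (u v a b : V) (he : E u v)
    (hau : a ≠ u) (hav : a ≠ v) (hbu : b ≠ u) (hbv : b ≠ v)
    (hsep : ¬ Relation.ReflTransGen
      (fun x y => (E x y ∨ E y x) ∧ x ≠ u ∧ x ≠ v ∧ y ≠ u ∧ y ≠ v) a b) :
    (∀ l : List V, IsDicycle E l → a ∈ l → b ∈ l →
      u ∈ l ∧ v ∈ l ∧
      (∀ i : Fin l.length, ¬(l.get i = u ∧ l.get (cycNext l i) = v)) ∧
      (∀ i : Fin l.length, ¬(l.get i = v ∧ l.get (cycNext l i) = u)) ∧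
      IsChord E l u v) ∧
    (∀ l : List V, IsChordlessDicycle E l → ¬(a ∈ l ∧ b ∈ l)) :=
  edge_separator_chord_general E u v a b he hau hav hbu hbv hsep
end

section
/- Let G be a finite simple graph and v a simplicial vertex, i.e., a vertex whose neighborhood N(v) forms a clique (any two distinct neighbors of v are adjacent). Then there exists a minimum vertex cover of G that contains all of N(v) and does not contain v. -/
/-! Let `T` be a minimum vertex cover. Since `N(v)` is a clique, `T` misses at most one vertex
of `N(v)`, and if it misses one then it contains `v`. So `(T \ {v}) ∪ N(v)`, which is again a
cover, is no larger than `T`. -/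

/-- `S` is a vertex cover of the simple graph `G`: every edge has an endpoint in `S`. -/
def IsVertexCover {V : Type*} (G : SimpleGraph V) (S : Set V) : Prop :=
  ∀ ⦃x y : V⦄, G.Adj x y → x ∈ S ∨ y ∈ S

open Finset

namespace IsVertexCover

variable {V : Type*} {G : SimpleGraph V}

theorem exists_forall_card_le [Fintype V] (G : SimpleGraph V) :
    ∃ T : Finset V, IsVertexCover G T ∧ ∀ T' : Finset V, IsVertexCover G T' → #T ≤ #T' :=
  Set.exists_min_image {T : Finset V | IsVertexCover G T} card (Set.toFinite _)
    ⟨univ, fun x _ _ => Or.inl (mem_univ x)⟩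

theorem neighborSet_subset_of_notMem {S : Set V} {v : V} (hS : IsVertexCover G S)
    (hv : v ∉ S) : G.neighborSet v ⊆ S :=
  fun _ hw => (hS hw).resolve_left hv

theorem diff_singleton_union_neighborSet {S : Set V} (hS : IsVertexCover G S) (v : V) :
    IsVertexCover G (S \ {v} ∪ G.neighborSet v) := by
  intro x y hxy
  by_cases hx : x = v
  · subst hx
    exact Or.inr (Or.inr hxy)
  by_cases hy : y = v
  · subst hy
    exact Or.inl (Or.inr hxy.symm)
  exact (hS hxy).imp (fun h => Or.inl ⟨h, hx⟩) (fun h => Or.inl ⟨h, hy⟩)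

theorem card_sdiff_le_one_of_isClique [DecidableEq V] {T s : Finset V}
    (hT : IsVertexCover G T) (hs : G.IsClique (s : Set V)) : #(s \ T) ≤ 1 := by
  rw [card_le_one]
  intro a ha b hb
  by_contra hab
  rw [mem_sdiff] at ha hb
  exact (hT (hs ha.1 hb.1 hab)).elim ha.2 hb.2

theorem card_erase_union_neighborFinset_le [DecidableEq V] {v : V}
    [Fintype (G.neighborSet v)] {T : Finset V} (hT : IsVertexCover G T)
    (hv : G.IsClique (G.neighborSet v)) : #(T.erase v ∪ G.neighborFinset v) ≤ #T := by
  by_cases hvT : v ∈ T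
  · have hsubset : T.erase v ∪ G.neighborFinset v ⊆ T.erase v ∪ (G.neighborFinset v \ T) := by
      intro w
      simp only [mem_union, mem_erase, mem_sdiff, SimpleGraph.mem_neighborFinset]
      rintro (h | h)
      · exact Or.inl h
      · by_cases hwT : w ∈ T
        · exact Or.inl ⟨(G.ne_of_adj h).symm, hwT⟩
        · exact Or.inr ⟨h, hwT⟩
    calc #(T.erase v ∪ G.neighborFinset v)
        ≤ #(T.erase v) + #(G.neighborFinset v \ T) := (card_le_card hsubset).trans (card_union_le _ _)
      _ ≤ (#T - 1) + 1 :=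
          add_le_add (card_erase_of_mem hvT).le
            (hT.card_sdiff_le_one_of_isClique (by rwa [SimpleGraph.coe_neighborFinset]))
      _ = #T := Nat.sub_add_cancel (card_pos.2 ⟨v, hvT⟩)
  · refine card_le_card (union_subset (erase_subset v T) fun w hw => ?_)
    exact mod_cast hT.neighborSet_subset_of_notMem (mod_cast hvT) ((G.mem_neighborFinset v w).1 hw)

end IsVertexCover

theorem simplicial_vertex_cover {V : Type*} [Fintype V] (G : SimpleGraph V)
    (v : V) (hsimp : ∀ x y, G.Adj v x → G.Adj v y → x ≠ y → G.Adj x y) :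
    ∃ S : Finset V, IsVertexCover G ↑S ∧ (∀ w, G.Adj v w → w ∈ S) ∧ v ∉ S ∧
      ∀ T : Finset V, IsVertexCover G ↑T → S.card ≤ T.card := by
  classical
  obtain ⟨T, hT, hTmin⟩ := IsVertexCover.exists_forall_card_le G
  have hclique : G.IsClique (G.neighborSet v) := fun x hx y hy hxy => hsimp x y hx hy hxy
  refine ⟨T.erase v ∪ G.neighborFinset v, ?_, ?_, ?_, ?_⟩
  · simpa using hT.diff_singleton_union_neighborSet v
  · intro w hw
    simp [hw]
  · simp
  · intro T' hT'
    exact (hT.card_erase_union_neighborFinset_le hclique).trans (hTmin T' hT')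
end

section
/- Let G be a finite simple graph with adjacent vertices u and v such that v dominates u, meaning every neighbor of u other than v is also a neighbor of v (N(u) ⊆ N(v) ∪ {v}). Then there exists a minimum vertex cover of G containing v. -/
/-!
A minimum cover `S` containing `u` but not `v` must contain every neighbour of `v`, hence,
as `v` dominates `u`, every neighbour of `u` other than `v`. Swapping `u` for `v` in `S`
therefore gives another cover of the same size.
-/

open Finset

namespace IsVertexCover

variable {V : Type*} {G : SimpleGraph V}

theorem mem_of_adj_of_notMem {S : Set V} (hS : IsVertexCover G S) {x y : V}
    (hxy : G.Adj x y) (hx : x ∉ S) : y ∈ S :=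
  (hS hxy).resolve_left hx

theorem insert_erase [DecidableEq V] {S : Finset V} (hS : IsVertexCover G ↑S) {u v : V}
    (hv : v ∉ S) (hdom : ∀ w, G.Adj u w → w ≠ v → G.Adj v w) :
    IsVertexCover G ↑(insert v (S.erase u)) := by
  have hkeep : ∀ x ∈ S, x ≠ u → x ∈ insert v (S.erase u) := fun x hx hxu =>
    mem_insert_of_mem (mem_erase.2 ⟨hxu, hx⟩)
  have hnbr : ∀ y, G.Adj u y → y ∈ insert v (S.erase u) := by
    intro y huy
    by_cases hyv : y = v
    · exact hyv.symm ▸ mem_insert_self v _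
    · exact hkeep y (hS.mem_of_adj_of_notMem (hdom y huy hyv) hv) huy.ne'
  intro x y hxy
  by_cases hxu : x = u
  · exact Or.inr (hnbr y (hxu ▸ hxy))
  by_cases hyu : y = u
  · exact Or.inl (hnbr x (hyu ▸ hxy.symm))
  exact (hS hxy).imp (hkeep x · hxu) (hkeep y · hyu)

theorem exists_card_le [Fintype V] (G : SimpleGraph V) :
    ∃ S : Finset V, IsVertexCover G ↑S ∧ ∀ T : Finset V, IsVertexCover G ↑T → #S ≤ #T := by
  classical
  obtain ⟨S, hS, hmin⟩ := exists_min_image ({S | IsVertexCover G ↑S} : Finset (Finset V)) card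
    ⟨univ, mem_filter.2 ⟨mem_univ _, fun x _ _ => Or.inl (mem_univ x)⟩⟩
  exact ⟨S, (mem_filter.1 hS).2, fun T hT => hmin T (mem_filter.2 ⟨mem_univ T, hT⟩)⟩

end IsVertexCover

theorem dominated_vertex_cover {V : Type*} [Fintype V] (G : SimpleGraph V)
    (u v : V) (hadj : G.Adj u v)
    (hdom : ∀ w, G.Adj u w → w ≠ v → G.Adj v w) :
    ∃ S : Finset V, IsVertexCover G ↑S ∧ v ∈ S ∧
      ∀ T : Finset V, IsVertexCover G ↑T → S.card ≤ T.card := by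
  classical
  obtain ⟨S, hS, hmin⟩ := IsVertexCover.exists_card_le G
  by_cases hv : v ∈ S
  · exact ⟨S, hS, hv, hmin⟩
  have hu : u ∈ S := hS.mem_of_adj_of_notMem hadj.symm hv
  have hcard : #(insert v (S.erase u)) = #S := by
    rw [card_insert_of_notMem fun h => hv (mem_of_mem_erase h), card_erase_add_one hu]
  exact ⟨insert v (S.erase u), hS.insert_erase hv hdom, mem_insert_self v _,
    fun T hT => hcard ▸ hmin T hT⟩
end

section
/- Let G be a finite simple graph in which distinct vertices (a, b, c, d) form a generalized desk: they induce a 4-cycle (edges ab, bc, cd, da are present and edges ac, bd are absent), each of a, b, c, d has degree at least 3, |N(a) ∪ N(c)| ≤ 4, |N(b) \ N(d)| ≤ 1, and |N(d) \ N(b)| ≤ 1. Then {a, c} and {b, d} are alternative sets: there exists a minimum vertex cover S of G such that either {a, c} ⊆ S and S ∩ {b, d} = ∅, or {b, d} ⊆ S and S ∩ {a, c} = ∅. -/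
/-!
Start from any minimum vertex cover `T`. For an independent set `R`, trading `T ∩ R` for the
neighbours of `R` outside `T` yields a vertex cover avoiding `R` and containing `N(R)`, which is
again minimum as soon as `|N(R) \ T| ≤ |T ∩ R|`. If `b` or `d` is missing from `T`, then
`N(b) ⊆ T` or `N(d) ⊆ T`, and the conditions `|N(b) \ N(d)|, |N(d) \ N(b)| ≤ 1` make the trade
with `R = {b, d}` affordable. If `b, d ∈ T`, then `N(a) ∪ N(c)` has at most four vertices, two
of which (`b` and `d`) lie in `T`, and all three or more neighbours of `a` (or `c`) lie in `T`
when `a ∉ T` (or `c ∉ T`); so the trade with `R = {a, c}` is affordable.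
-/

open Finset

theorem Finset.card_sdiff_union_add_card_inter_le {α : Type*} [DecidableEq α] {T R N : Finset α}
    (h : Disjoint R N) : #(T \ R ∪ N) + #(T ∩ R) ≤ #T + #(N \ T) := by
  have hsub : T \ R ∪ N ⊆ T \ R ∪ N \ T := by
    intro x hx
    rcases mem_union.mp hx with hx | hxN
    · exact mem_union_left _ hx
    by_cases hxT : x ∈ T
    · exact mem_union_left _ (mem_sdiff.mpr ⟨hxT, disjoint_right.mp h hxN⟩)
    · exact mem_union_right _ (mem_sdiff.mpr ⟨hxN, hxT⟩)
  calc #(T \ R ∪ N) + #(T ∩ R) ≤ #(T \ R) + #(N \ T) + #(T ∩ R) := by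
        grw [card_le_card hsub, card_union_le]
    _ = #T + #(N \ T) := by rw [add_right_comm, card_sdiff_add_card_inter]

section VertexCover

variable {V : Type*} {G : SimpleGraph V}

def IsMinVertexCover (G : SimpleGraph V) (S : Finset V) : Prop :=
  IsVertexCover G ↑S ∧ ∀ T : Finset V, IsVertexCover G ↑T → S.card ≤ T.card

theorem exists_isMinVertexCover [Fintype V] (G : SimpleGraph V) :
    ∃ S : Finset V, IsMinVertexCover G S := by
  classical
  obtain ⟨S, hS, hmin⟩ := exists_min_image ({S | IsVertexCover G ↑S} : Finset (Finset V)) card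
    ⟨univ, by simp [IsVertexCover]⟩
  exact ⟨S, (mem_filter.mp hS).2, fun T hT => hmin T (by simpa using hT)⟩

namespace IsVertexCover

variable [Fintype V] [DecidableRel G.Adj] {T : Finset V}

theorem neighborFinset_subset_of_notMem (hT : IsVertexCover G ↑T) {v : V} (hv : v ∉ T) :
    G.neighborFinset v ⊆ T := fun w hw =>
  ((hT ((G.mem_neighborFinset v w).mp hw)).resolve_left hv)

theorem sdiff_union_biUnion_neighborFinset [DecidableEq V] (hT : IsVertexCover G ↑T)
    (R : Finset V) :
    IsVertexCover G ↑(T \ R ∪ R.biUnion (G.neighborFinset ·)) := by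
  intro x y hxy
  simp only [coe_union, coe_sdiff, coe_biUnion, Set.mem_union, Set.mem_sdiff, Set.mem_iUnion,
    mem_coe, SimpleGraph.mem_neighborFinset]
  by_cases hx : x ∈ R
  · exact Or.inr (Or.inr ⟨x, hx, hxy⟩)
  by_cases hy : y ∈ R
  · exact Or.inl (Or.inr ⟨y, hy, hxy.symm⟩)
  rcases hT hxy with hxT | hyT
  · exact Or.inl (Or.inl ⟨hxT, hx⟩)
  · exact Or.inr (Or.inl ⟨hyT, hy⟩)

end IsVertexCover

section Exchange

variable [Fintype V] [DecidableEq V] [DecidableRel G.Adj] {T : Finset V}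

theorem disjoint_biUnion_neighborFinset {R : Finset V} (hR : G.IsIndepSet ↑R) :
    Disjoint R (R.biUnion (G.neighborFinset ·)) := by
  refine disjoint_left.mpr fun x hx hxN => ?_
  obtain ⟨r, hr, hrx⟩ := mem_biUnion.mp hxN
  rw [SimpleGraph.mem_neighborFinset] at hrx
  exact hR (mem_coe.mpr hr) (mem_coe.mpr hx) hrx.ne hrx

theorem IsMinVertexCover.exists_disjoint_superset_biUnion_neighborFinset
    {R : Finset V} (hT : IsMinVertexCover G T) (hR : G.IsIndepSet ↑R)
    (hcard : #(R.biUnion (G.neighborFinset ·) \ T) ≤ #(T ∩ R)) :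
    ∃ S : Finset V, IsMinVertexCover G S ∧ Disjoint R S ∧
      R.biUnion (G.neighborFinset ·) ⊆ S := by
  have hdisj := disjoint_biUnion_neighborFinset hR
  refine ⟨T \ R ∪ R.biUnion (G.neighborFinset ·),
    ⟨hT.1.sdiff_union_biUnion_neighborFinset R, fun T' hT' => ?_⟩, ?_, subset_union_right⟩
  · have hS := card_sdiff_union_add_card_inter_le (T := T) hdisj
    have hmin := hT.2 T' hT'
    omega
  · exact disjoint_union_right.mpr ⟨disjoint_sdiff_self_right, hdisj⟩

theorem IsMinVertexCover.exists_notMem_pair_of_not_adj (hT : IsMinVertexCover G T) {v w : V}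
    (hvw : ¬ G.Adj v w)
    (hcard : #((G.neighborFinset v ∪ G.neighborFinset w) \ T) ≤ #(T ∩ {v, w})) :
    ∃ S : Finset V, IsMinVertexCover G S ∧ v ∉ S ∧ w ∉ S ∧
      G.neighborFinset v ∪ G.neighborFinset w ⊆ S := by
  have hpair : ({v, w} : Finset V).biUnion (G.neighborFinset ·) =
      G.neighborFinset v ∪ G.neighborFinset w := by
    rw [biUnion_insert, singleton_biUnion]
  have hindep : G.IsIndepSet ↑({v, w} : Finset V) := by
    rw [coe_pair]
    exact Set.pairwise_pair.mpr fun _ => ⟨hvw, fun h => hvw h.symm⟩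
  rw [← hpair] at hcard ⊢
  obtain ⟨S, hS, hdisj, hNS⟩ := hT.exists_disjoint_superset_biUnion_neighborFinset hindep hcard
  exact ⟨S, hS, disjoint_left.mp hdisj (by simp), disjoint_left.mp hdisj (by simp), hNS⟩

theorem card_neighborFinset_union_sdiff_le_of_notMem (hT : IsVertexCover G ↑T) {v w : V}
    (hv : v ∉ T) (hwv : #(G.neighborFinset w \ G.neighborFinset v) ≤ 1) :
    #((G.neighborFinset v ∪ G.neighborFinset w) \ T) ≤ #(T ∩ {v, w}) := by
  have hNv := hT.neighborFinset_subset_of_notMem hv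
  by_cases hw : w ∈ T
  · calc #((G.neighborFinset v ∪ G.neighborFinset w) \ T)
          ≤ #(G.neighborFinset w \ G.neighborFinset v) := by
            refine card_le_card fun x hx => ?_
            simp only [mem_sdiff, mem_union] at hx ⊢
            exact ⟨hx.1.resolve_left fun h => hx.2 (hNv h), fun h => hx.2 (hNv h)⟩
      _ ≤ #(T ∩ {v, w}) := hwv.trans (card_pos.mpr ⟨w, by simp [hw]⟩)
  · have hNw := hT.neighborFinset_subset_of_notMem hw
    simp [sdiff_eq_empty_iff_subset.mpr (union_subset hNv hNw)]

theorem card_neighborFinset_union_sdiff_le_of_common_mem (hT : IsVertexCover G ↑T)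
    {a c b d : V} (hac : a ≠ c) (hbd : b ≠ d) (hab : G.Adj a b) (had : G.Adj a d)
    (hbT : b ∈ T) (hdT : d ∈ T) (hdega : 3 ≤ G.degree a) (hdegc : 3 ≤ G.degree c)
    (hN : #(G.neighborFinset a ∪ G.neighborFinset c) ≤ 4) :
    #((G.neighborFinset a ∪ G.neighborFinset c) \ T) ≤ #(T ∩ {a, c}) := by
  set N := G.neighborFinset a ∪ G.neighborFinset c
  have hsplit := card_sdiff_add_card_inter N T
  have hdeg_le {v : V} (hv : v ∉ T) (hvN : G.neighborFinset v ⊆ N) :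
      G.degree v ≤ #(N ∩ T) := by
    rw [← G.card_neighborFinset_eq_degree]
    exact card_le_card (subset_inter hvN (hT.neighborFinset_subset_of_notMem hv))
  by_cases ha : a ∈ T <;> by_cases hc : c ∈ T
  · have hbd_le : #({b, d} : Finset V) ≤ #(N ∩ T) := by
      refine card_le_card (insert_subset ?_ (singleton_subset_iff.mpr ?_)) <;>
        simp [N, *]
    rw [card_pair hbd] at hbd_le
    rw [inter_eq_right.mpr (insert_subset ha (singleton_subset_iff.mpr hc)), card_pair hac]
    omega
  · have hc_le := hdeg_le hc subset_union_right
    have ha_mem : 1 ≤ #(T ∩ {a, c}) := card_pos.mpr ⟨a, by simp [ha]⟩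
    omega
  · have ha_le := hdeg_le ha subset_union_left
    have hc_mem : 1 ≤ #(T ∩ {a, c}) := card_pos.mpr ⟨c, by simp [hc]⟩
    omega
  · have hNT : N ⊆ T := union_subset (hT.neighborFinset_subset_of_notMem ha)
      (hT.neighborFinset_subset_of_notMem hc)
    simp [sdiff_eq_empty_iff_subset.mpr hNT]

end Exchange

end VertexCover

theorem generalized_desk_alternative_general {V : Type*} [Fintype V] [DecidableEq V]
    (G : SimpleGraph V) [DecidableRel G.Adj]
    (a b c d : V) (hnd : ([a, b, c, d] : List V).Nodup)
    (hab : G.Adj a b) (hbc : G.Adj b c) (hda : G.Adj d a)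
    (hac : ¬ G.Adj a c) (hbd : ¬ G.Adj b d)
    (hdega : 3 ≤ G.degree a)
    (hdegc : 3 ≤ G.degree c)
    (hNac : (G.neighborFinset a ∪ G.neighborFinset c).card ≤ 4)
    (hNbd : (G.neighborFinset b \ G.neighborFinset d).card ≤ 1)
    (hNdb : (G.neighborFinset d \ G.neighborFinset b).card ≤ 1) :
    ∃ S : Finset V, IsVertexCover G ↑S ∧
      (∀ T : Finset V, IsVertexCover G ↑T → S.card ≤ T.card) ∧
      ((a ∈ S ∧ c ∈ S ∧ b ∉ S ∧ d ∉ S) ∨ (b ∈ S ∧ d ∈ S ∧ a ∉ S ∧ c ∉ S)) := by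
  obtain ⟨-, hac', -, -, hbd', -⟩ : a ≠ b ∧ a ≠ c ∧ a ≠ d ∧ b ≠ c ∧ b ≠ d ∧ c ≠ d := by
    simpa [and_assoc] using hnd
  obtain ⟨T, hT⟩ := exists_isMinVertexCover G
  by_cases hbdT : b ∈ T ∧ d ∈ T
  · obtain ⟨S, hS, haS, hcS, hNS⟩ := hT.exists_notMem_pair_of_not_adj hac
      (card_neighborFinset_union_sdiff_le_of_common_mem hT.1 hac' hbd' hab hda.symm
        hbdT.1 hbdT.2 hdega hdegc hNac)
    exact ⟨S, hS.1, hS.2, Or.inr ⟨hNS (by simp [hab]), hNS (by simp [hda.symm]), haS, hcS⟩⟩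
  · have hcard : #((G.neighborFinset b ∪ G.neighborFinset d) \ T) ≤ #(T ∩ {b, d}) := by
      rcases not_and_or.mp hbdT with hb | hd
      · exact card_neighborFinset_union_sdiff_le_of_notMem hT.1 hb hNdb
      · rw [union_comm, pair_comm]
        exact card_neighborFinset_union_sdiff_le_of_notMem hT.1 hd hNbd
    obtain ⟨S, hS, hbS, hdS, hNS⟩ := hT.exists_notMem_pair_of_not_adj hbd hcard
    exact ⟨S, hS.1, hS.2, Or.inl ⟨hNS (by simp [hab.symm]), hNS (by simp [hbc]), hbS, hdS⟩⟩

theorem generalized_desk_alternative {V : Type*} [Fintype V] [DecidableEq V]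
    (G : SimpleGraph V) [DecidableRel G.Adj]
    (a b c d : V) (hnd : ([a, b, c, d] : List V).Nodup)
    (hab : G.Adj a b) (hbc : G.Adj b c) (hcd : G.Adj c d) (hda : G.Adj d a)
    (hac : ¬ G.Adj a c) (hbd : ¬ G.Adj b d)
    (hdega : 3 ≤ G.degree a) (hdegb : 3 ≤ G.degree b)
    (hdegc : 3 ≤ G.degree c) (hdegd : 3 ≤ G.degree d)
    (hNac : (G.neighborFinset a ∪ G.neighborFinset c).card ≤ 4)
    (hNbd : (G.neighborFinset b \ G.neighborFinset d).card ≤ 1)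
    (hNdb : (G.neighborFinset d \ G.neighborFinset b).card ≤ 1) :
    ∃ S : Finset V, IsVertexCover G ↑S ∧
      (∀ T : Finset V, IsVertexCover G ↑T → S.card ≤ T.card) ∧
      ((a ∈ S ∧ c ∈ S ∧ b ∉ S ∧ d ∉ S) ∨ (b ∈ S ∧ d ∈ S ∧ a ∉ S ∧ c ∉ S)) :=
  generalized_desk_alternative_general G a b c d hnd hab hbc hda hac hbd hdega hdegc hNac hNbd hNdb
end
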